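/- arXiv:1807.08738 — 2 statements merged into one kernel-verified Lean document; each statement's English description precedes it below -/
import Mathlib

section
/- Let G be a finite undirected weighted graph with distinct edge weights, H a subgraph of G, and F the minimum spanning forest of H. Then every edge of the minimum spanning forest of G is either an edge of F or an F-light edge of G. -/
/-- Total weight of a subgraph `F` (sum of `w` over its edges). -/
noncomputable def weightSum {V : Type*} [Fintype V] [DecidableEq V]
    (w : Sym2 V → ℝ) (F : SimpleGraph V) : ℝ :=
  ∑ e : Sym2 V, F.edgeSet.indicator w e

/-- `F` is a minimum spanning forest of `G` w.r.t. weights `w`: a minimum-weight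
acyclic subgraph of `G` preserving connectivity. -/
def IsMSF {V : Type*} [Fintype V] [DecidableEq V]
    (G : SimpleGraph V) (w : Sym2 V → ℝ) (F : SimpleGraph V) : Prop :=
  F ≤ G ∧ F.IsAcyclic ∧ (∀ u v, G.Reachable u v → F.Reachable u v) ∧
    ∀ F' : SimpleGraph V, F' ≤ G → F'.IsAcyclic →
      (∀ u v, G.Reachable u v → F'.Reachable u v) → weightSum w F ≤ weightSum w F'

/-- The subgraph of `F` consisting of edges of weight `< c`. -/
def lighterSub {V : Type*} (F : SimpleGraph V) (w : Sym2 V → ℝ) (c : ℝ) : SimpleGraph V :=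
  SimpleGraph.fromRel (fun x y => F.Adj x y ∧ w s(x, y) < c)

/-- An edge `{u,v}` of `G` is `F`-light iff it is not the heaviest edge of the cycle in
`F ∪ {e}`; equivalently, its endpoints are not connected by edges of `F` lighter than it
(edges joining distinct trees of `F` are `F`-light). -/
def FLight {V : Type*} [Fintype V] [DecidableEq V]
    (G F : SimpleGraph V) (w : Sym2 V → ℝ) (u v : V) : Prop :=
  G.Adj u v ∧ ¬ (lighterSub F w (w s(u, v))).Reachable u v

/-!
This is the cycle property of minimum spanning forests. Let `uv` be an edge of the minimum
spanning forest `M` of `G`. Deleting `uv` from `M` separates `u` from `v`, so every path from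
`u` to `v` has an edge `xy` leaving the component of `u` in `M - uv`. Then `M - uv + xy` is
again an acyclic subgraph of `G` with the same connectivity, and minimality of `M` forces
`w(uv) ≤ w(xy)`. Hence `u` and `v` are not joined by edges of `G` lighter than `uv`, and
a fortiori not by such edges of `F ≤ H ≤ G`.
-/

section

variable {V : Type*}

namespace SimpleGraph

variable {G A B : SimpleGraph V}

theorem Reachable.of_forall_adj_reachable (h : ∀ a b, A.Adj a b → B.Reachable a b) {a b : V}
    (hab : A.Reachable a b) : B.Reachable a b := by
  rw [reachable_iff_reflTransGen] at hab ⊢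
  exact Relation.ReflTransGen.lift' id
    (fun a b hab ↦ (reachable_iff_reflTransGen a b).mp (h a b hab)) _ _ hab

theorem reachable_deleteEdges_or {a u v : V} (h : G.Reachable a u) :
    (G.deleteEdges {s(u, v)}).Reachable a u ∨ (G.deleteEdges {s(u, v)}).Reachable a v := by
  obtain ⟨p⟩ := h
  induction p with
  | nil => exact .inl .rfl
  | @cons a c u hac _ ih =>
    by_cases hedge : s(a, c) = s(u, v)
    · rcases Sym2.eq_iff.mp hedge with ⟨rfl, -⟩ | ⟨rfl, -⟩
      · exact .inl .rfl
      · exact .inr .rfl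
    · have hac' : (G.deleteEdges {s(u, v)}).Adj a c := by simp [hac, hedge]
      exact ih.imp hac'.reachable.trans hac'.reachable.trans

theorem deleteEdges_sup_edge_of_adj {u v : V} (h : G.Adj u v) :
    G.deleteEdges {s(u, v)} ⊔ edge u v = G := by
  ext a b
  simp only [sup_adj, deleteEdges_adj, edge_adj, Set.mem_singleton_iff, Sym2.eq_iff]
  constructor
  · rintro (⟨hab, -⟩ | ⟨⟨rfl, rfl⟩ | ⟨rfl, rfl⟩, -⟩)
    exacts [hab, h, h.symm]
  · intro hab
    by_cases hedge : (a = u ∧ b = v) ∨ (a = v ∧ b = u)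
    · exact .inr ⟨hedge, hab.ne⟩
    · exact .inl ⟨hab, hedge⟩

end SimpleGraph

open SimpleGraph

theorem weightSum_sup_edge [Fintype V] [DecidableEq V] (w : Sym2 V → ℝ) {A : SimpleGraph V}
    {x y : V} (hxy : x ≠ y) (hA : ¬ A.Adj x y) :
    weightSum w (A ⊔ edge x y) = weightSum w A + w s(x, y) := by
  have hdisj : Disjoint A.edgeSet {s(x, y)} := Set.disjoint_singleton_right.mpr hA
  rw [weightSum, edgeSet_sup, edgeSet_edge_of_ne hxy, Set.indicator_union_of_disjoint hdisj,
    Finset.sum_add_distrib, weightSum]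
  simp [Set.indicator_apply]

theorem lighterSub_adj {F : SimpleGraph V} {w : Sym2 V → ℝ} {c : ℝ} {a b : V} :
    (lighterSub F w c).Adj a b ↔ F.Adj a b ∧ w s(a, b) < c := by
  simp only [lighterSub, fromRel_adj]
  constructor
  · rintro ⟨-, ⟨hab, hw⟩ | ⟨hba, hw⟩⟩
    exacts [⟨hab, hw⟩, ⟨hba.symm, Sym2.eq_swap ▸ hw⟩]
  · rintro ⟨hab, hw⟩
    exact ⟨hab.ne, .inl ⟨hab, hw⟩⟩

theorem lighterSub_mono {F G : SimpleGraph V} (hFG : F ≤ G) (w : Sym2 V → ℝ) (c : ℝ) :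
    lighterSub F w c ≤ lighterSub G w c := fun _ _ h ↦
  let ⟨hab, hw⟩ := lighterSub_adj.mp h
  lighterSub_adj.mpr ⟨hFG hab, hw⟩

namespace IsMSF

variable [Fintype V] [DecidableEq V] {G M : SimpleGraph V} {w : Sym2 V → ℝ}

theorem weight_le_of_crossing (hM : IsMSF G w M) {u v x y : V} (huv : M.Adj u v)
    (hxy : G.Adj x y) (hx : (M.deleteEdges {s(u, v)}).Reachable u x)
    (hy : ¬ (M.deleteEdges {s(u, v)}).Reachable u y) : w s(u, v) ≤ w s(x, y) := by
  obtain ⟨hMG, hMacyc, hMreach, hMmin⟩ := hM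
  set M' := M.deleteEdges {s(u, v)}
  have hM'M : M' ≤ M := deleteEdges_le _
  have hnreach : ¬ M'.Reachable x y := fun h ↦ hy (hx.trans h)
  have hyv : M'.Reachable y v := by
    have huy : M.Reachable u y := hMreach u y ((hx.mono (hM'M.trans hMG)).trans hxy.reachable)
    exact (reachable_deleteEdges_or huy.symm).resolve_left fun h ↦ hy h.symm
  set N := M' ⊔ edge x y
  have hNG : N ≤ G := sup_le (hM'M.trans hMG) ((edge_le_iff G).mpr (.inr hxy))
  have hNacyc : N.IsAcyclic := (hMacyc.anti hM'M).sup_edge_of_not_reachable hnreach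
  have hNuv : N.Reachable u v := by
    have hxy' : (edge x y).Adj x y := (edge_adj ..).mpr ⟨.inl ⟨rfl, rfl⟩, hxy.ne⟩
    exact (hx.mono le_sup_left).trans
      ((hxy'.reachable.mono le_sup_right).trans (hyv.mono le_sup_left))
  have hNreach : ∀ a b, G.Reachable a b → N.Reachable a b := by
    refine fun a b hab ↦ (hMreach a b hab).of_forall_adj_reachable fun p q hpq ↦ ?_
    rw [← deleteEdges_sup_edge_of_adj huv, sup_adj, edge_adj] at hpq
    rcases hpq with hpq | ⟨⟨rfl, rfl⟩ | ⟨rfl, rfl⟩, -⟩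
    exacts [(le_sup_left : M' ≤ N) hpq |>.reachable, hNuv, hNuv.symm]
  have hweightM : weightSum w M = weightSum w M' + w s(u, v) := by
    conv_lhs => rw [← deleteEdges_sup_edge_of_adj huv]
    exact weightSum_sup_edge w huv.ne (by simp)
  have hNmin := hMmin N hNG hNacyc hNreach
  rw [hweightM, weightSum_sup_edge w hxy.ne fun h ↦ hnreach h.reachable] at hNmin
  linarith

theorem not_reachable_lighterSub (hM : IsMSF G w M) {u v : V} (huv : M.Adj u v) :
    ¬ (lighterSub G w (w s(u, v))).Reachable u v := by
  rintro ⟨p⟩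
  have hsplit : ¬ (M.deleteEdges {s(u, v)}).Reachable u v :=
    isBridge_iff.mp (isAcyclic_iff_forall_adj_isBridge.mp hM.2.1 huv)
  obtain ⟨d, -, hx, hy⟩ :=
    p.exists_boundary_dart {z | (M.deleteEdges {s(u, v)}).Reachable u z} .rfl hsplit
  obtain ⟨hxy, hlt⟩ := lighterSub_adj.mp d.adj
  exact (hM.weight_le_of_crossing huv hxy hx hy).not_gt hlt

end IsMSF

end

theorem stmt1_general {V : Type*} [Fintype V] [DecidableEq V]
    (G H F M : SimpleGraph V) (w : Sym2 V → ℝ)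
    (hHG : H ≤ G)
    (hF : IsMSF H w F) (hM : IsMSF G w M) :
    ∀ u v, M.Adj u v → F.Adj u v ∨ FLight G F w u v := by
  intro u v huv
  have hlight : ¬ (lighterSub F w (w s(u, v))).Reachable u v := fun h ↦
    hM.not_reachable_lighterSub huv (h.mono (lighterSub_mono (hF.1.trans hHG) _ _))
  exact .inr ⟨hM.1 huv, hlight⟩

/-- if `H ⊆ G`, weights are distinct, and `F` is the MSF of `H`, then every
edge of the MSF of `G` is an edge of `F` or an `F`-light edge of `G`. -/
theorem stmt1 {V : Type*} [Fintype V] [DecidableEq V]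
    (G H F M : SimpleGraph V) (w : Sym2 V → ℝ)
    (hHG : H ≤ G)
    (hdistinct : ∀ e₁ ∈ G.edgeSet, ∀ e₂ ∈ G.edgeSet, w e₁ = w e₂ → e₁ = e₂)
    (hF : IsMSF H w F) (hM : IsMSF G w M) :
    ∀ u v, M.Adj u v → F.Adj u v ∨ FLight G F w u v :=
  stmt1_general G H F M w hHG hF hM
end

section
/- If each of n disjoint groups must receive at most α messages and send at most α messages, and within each group of α consecutive nodes the messages are first sorted by destination, then after redistributing the i-th smallest message of each node to the ((i−1 mod α)+1)-th member of its group, every node holds O(1) messages per destination. -/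
/-!
By monotonicity the positions of the messages with destination `d` form an interval of
length at most `c * α`. Such an interval is covered by `c` blocks of `α` consecutive
positions, and each block contains at most one position of a given residue mod `α`.
-/

open Finset

theorem Nat.card_filter_mod_eq_Ico_add_le_one (a α i : ℕ) :
    #{k ∈ Ico a (a + α) | k % α = i} ≤ 1 := by
  suffices ∀ k ∈ Ico a (a + α), ∀ k' ∈ Ico a (a + α), k % α = k' % α → k ≤ k' → k = k' by
    refine card_le_one.2 fun k hk k' hk' => ?_
    simp only [mem_filter] at hk hk'
    rcases le_total k k' with h | h
    · exact this k hk.1 k' hk'.1 (hk.2.trans hk'.2.symm) h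
    · exact (this k' hk'.1 k hk.1 (hk'.2.trans hk.2.symm) h).symm
  intro k hk k' hk' hmod hle
  simp only [mem_Ico] at hk hk'
  have hdvd : α ∣ k' - k := (Nat.modEq_iff_dvd' hle).1 hmod
  have := Nat.eq_zero_of_dvd_of_lt hdvd (by omega)
  omega

theorem Nat.card_filter_mod_eq_Ico_add_mul_le (a α i c : ℕ) :
    #{k ∈ Ico a (a + c * α) | k % α = i} ≤ c := by
  induction c with
  | zero => simp
  | succ c ih =>
    rw [add_one_mul, ← add_assoc, ← Ico_union_Ico_eq_Ico (b := a + c * α) (by omega) (by omega),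
      filter_union]
    exact (card_union_le _ _).trans (add_le_add ih (card_filter_mod_eq_Ico_add_le_one _ _ _))

theorem Finset.exists_val_mem_Ico_add_card_of_ordConnected {M : ℕ} {s : Finset (Fin M)}
    (hs : (s : Set (Fin M)).OrdConnected) : ∃ a : ℕ, ∀ j ∈ s, (j : ℕ) ∈ Ico a (a + #s) := by
  rcases s.eq_empty_or_nonempty with rfl | hne
  · simp
  refine ⟨s.min' hne, fun j hj => ?_⟩
  have hmin : s.min' hne ≤ j := s.min'_le j hj
  have hsub : Icc (s.min' hne) j ⊆ s := by
    simpa [← coe_subset] using hs.out (s.min'_mem hne) hj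
  have hcard := card_le_card hsub
  rw [Fin.card_Icc] at hcard
  rw [Fin.le_def] at hmin
  rw [mem_Ico]
  omega

theorem Monotone.ordConnected_filter_eq {M : ℕ} {dest : Fin M → ℕ} (hmono : Monotone dest)
    (d : ℕ) : ((univ.filter fun j => dest j = d : Finset (Fin M)) : Set (Fin M)).OrdConnected := by
  rw [coe_filter_univ]
  exact Set.ordConnected_singleton.preimage_mono hmono

theorem stmt16_general (α M c : ℕ) (dest : Fin M → ℕ)
    (hmono : Monotone dest)
    (hdest : ∀ d : ℕ, (Finset.univ.filter (fun j : Fin M => dest j = d)).card ≤ c * α) :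
    ∀ i d : ℕ,
      (Finset.univ.filter (fun j : Fin M => dest j = d ∧ (j : ℕ) % α = i)).card
        ≤ c + 1 := by
  intro i d
  obtain ⟨a, ha⟩ := exists_val_mem_Ico_add_card_of_ordConnected (hmono.ordConnected_filter_eq d)
  set held := univ.filter fun j : Fin M => dest j = d ∧ (j : ℕ) % α = i
  have hsub : held.map Fin.valEmbedding ⊆ {k ∈ Ico a (a + c * α) | k % α = i} := by
    simp only [held, subset_iff, mem_map, mem_filter, mem_univ, true_and, mem_Ico,
      Fin.valEmbedding_apply]
    rintro _ ⟨j, ⟨hjd, hji⟩, rfl⟩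
    have hj := mem_Ico.1 (ha j (by simpa using hjd))
    have := hdest d
    omega
  calc #held = #(held.map Fin.valEmbedding) := (card_map _).symm
    _ ≤ c := (card_le_card hsub).trans (Nat.card_filter_mod_eq_Ico_add_mul_le a α i c)
    _ ≤ c + 1 := c.le_succ

/-- routing pigeonhole: messages indexed by `Fin M` are sorted by
destination (`dest` is monotone) and no destination receives more than `c·α` messages.
If the `j`-th message in sorted order is assigned to group member `j mod α` (round-robin
distribution within a group of `α` nodes), then every node holds at most `c + 1` (i.e.
`O(1)`) messages per destination. -/
theorem stmt16 (α M c : ℕ) (hα : 0 < α) (dest : Fin M → ℕ)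
    (hmono : Monotone dest)
    (hdest : ∀ d : ℕ, (Finset.univ.filter (fun j : Fin M => dest j = d)).card ≤ c * α) :
    ∀ i d : ℕ,
      (Finset.univ.filter (fun j : Fin M => dest j = d ∧ (j : ℕ) % α = i)).card
        ≤ c + 1 :=
  stmt16_general α M c dest hmono hdest
end
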